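/- Let G=(V,E) be a finite connected graph with conductances W: E→ℝ_{>0} and killing measure κ: V→ℝ_{≥0}, let x₀∈V and a>0, and let μ be the probability measure on {φ∈ℝ^V: φ_{x₀}=a} whose density with respect to Lebesgue measure ∏_{x∈V∖{x₀}}dφ_x is proportional to exp(−(1/2)E(φ,φ)), where E(f,f)=Σ_{x∈V}κ_x f(x)²+Σ_{e∈E}W_e(f(e₊)−f(e₋))². Then conditionally on |φ|, the signs of φ follow the Ising distribution with interactions J_e(|φ|)=W_e|φ_{e₊}φ_{e₋}| conditioned on σ_{x₀}=+1; precisely, for all measurable F: ℝ_{≥0}^V→[0,∞] and g: {−1,+1}^V→[0,∞], ∫ F(|φ|)g(sgn(φ)) μ(dφ) = ∫ F(|φ|)·[Σ_{σ∈{−1,+1}^V: σ_{x₀}=+1} g(σ)exp(Σ_{e∈E}J_e(|φ|)σ_{e₊}σ_{e₋})] / [Σ_{σ∈{−1,+1}^V: σ_{x₀}=+1} exp(Σ_{e∈E}J_e(|φ|)σ_{e₊}σ_{e₋})] μ(dφ), where sgn(φ)_x∈{−1,+1} is the sign of φ_x (μ-a.e. φ has no zero coordinate, so this is a.e. well defined).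 -/

import Mathlib

open scoped Classical ENNReal
open MeasureTheory

noncomputable section

/-- The simple graph on `V` whose edges are the edges `e` of the multigraph
(with endpoint map `ends`) satisfying `p e`. -/
def og {V E : Type} (ends : E → V × V) (p : E → Prop) : SimpleGraph V :=
  SimpleGraph.fromRel (fun v w => ∃ e, p e ∧ (ends e).1 = v ∧ (ends e).2 = w)

/-- Spin value `+1` or `-1` encoded by a boolean. -/
def spin (b : Bool) : ℝ := if b then 1 else -1

variable {V E : Type} [Fintype V] [Fintype E]

/-- The Dirichlet form `E(f,f) = ∑_x κ_x f(x)² + ∑_e W_e (f(e₊) - f(e₋))²`. -/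
def dirichletForm (ends : E → V × V) (W : E → ℝ) (κ : V → ℝ) (f : V → ℝ) : ℝ :=
  ∑ x, κ x * f x ^ 2 + ∑ e, W e * (f (ends e).1 - f (ends e).2) ^ 2

/-- Extension of a field on `V ∖ {x₀}` to `V`, with value `a` at `x₀`. -/
def extV {V : Type} (x₀ : V) (a : ℝ) (φ : {x : V // x ≠ x₀} → ℝ) : V → ℝ :=
  fun x => if h : x = x₀ then a else φ ⟨x, h⟩

/-- Density (with respect to Lebesgue measure on the non-pinned coordinates) of the
GFF pinned at value `a` at `x₀`, up to normalization. -/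
def gffDens (ends : E → V × V) (W : E → ℝ) (κ : V → ℝ) (x₀ : V) (a : ℝ)
    (φ : {x : V // x ≠ x₀} → ℝ) : ℝ≥0∞ :=
  ENNReal.ofReal (Real.exp (-(1 / 2) * dirichletForm ends W κ (extV x₀ a φ)))

/-- The law of the GFF pinned at value `a` at `x₀` (a probability measure on the
non-pinned coordinates, with density proportional to `exp(-E(φ,φ)/2)`). -/
def gffMeasure (ends : E → V × V) (W : E → ℝ) (κ : V → ℝ) (x₀ : V) (a : ℝ) :
    Measure ({x : V // x ≠ x₀} → ℝ) :=
  (∫⁻ φ, gffDens ends W κ x₀ a φ)⁻¹ • volume.withDensity (gffDens ends W κ x₀ a)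

/-! ### Auxiliary material for `stmt7` -/

/-- Extension of a boolean spin configuration on `V ∖ {x₀}` to `V`, with value `true`
at `x₀`. -/
def extB {V : Type} (x₀ : V) (s : {x : V // x ≠ x₀} → Bool) : V → Bool :=
  fun x => if h : x = x₀ then true else s ⟨x, h⟩

lemma spin_sq (b : Bool) : spin b ^ 2 = 1 := by cases b <;> norm_num [spin]

lemma spin_mul_spin (b c : Bool) : spin b * spin c = spin (b == c) := by
  cases b <;> cases c <;> norm_num [spin]

lemma abs_spin (b : Bool) : |spin b| = 1 := by cases b <;> norm_num [spin]

lemma spin_sign_mul_abs {t : ℝ} (ht : t ≠ 0) : spin (decide (0 < t)) * |t| = t := by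
  rcases ht.lt_or_gt with h | h
  · simp [spin, h.not_gt, abs_of_neg h]
  · simp [spin, h, abs_of_pos h]

lemma decide_pos_spin_mul (b : Bool) {t : ℝ} (ht : t ≠ 0) :
    decide (0 < spin b * t) = (b == decide (0 < t)) := by
  rcases ht.lt_or_gt with h | h <;> cases b <;>
    simp [spin, h, h.not_gt, asymm h]

lemma extV_spin {V : Type} (x₀ : V) (a : ℝ) (s : {x : V // x ≠ x₀} → Bool)
    (φ : {x : V // x ≠ x₀} → ℝ) :
    extV x₀ a (fun x => spin (s x) * φ x)
      = fun x => spin (extB x₀ s x) * extV x₀ a φ x := by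
  funext x
  by_cases h : x = x₀ <;> simp [extV, extB, h, spin]

/-- The "amplitude" part of the Dirichlet form, invariant under sign flips. -/
def dirichletFormA (ends : E → V × V) (W : E → ℝ) (κ : V → ℝ) (f : V → ℝ) : ℝ :=
  ∑ x, κ x * f x ^ 2 + ∑ e, W e * (f (ends e).1 ^ 2 + f (ends e).2 ^ 2)

lemma dirichlet_spin (ends : E → V × V) (W : E → ℝ) (κ : V → ℝ)
    (σ : V → Bool) (Ψ : V → ℝ) (hΨ : ∀ x, Ψ x ≠ 0) :
    dirichletForm ends W κ (fun x => spin (σ x) * Ψ x)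
      = dirichletFormA ends W κ Ψ
        - 2 * ∑ e, W e * |Ψ (ends e).1 * Ψ (ends e).2|
            * spin (σ (ends e).1 == decide (0 < Ψ (ends e).1))
            * spin (σ (ends e).2 == decide (0 < Ψ (ends e).2)) := by
  have key : ∀ (b₁ b₂ : Bool) (t₁ t₂ : ℝ), t₁ ≠ 0 → t₂ ≠ 0 →
      (spin b₁ * t₁ - spin b₂ * t₂) ^ 2
        = (t₁ ^ 2 + t₂ ^ 2)
          - 2 * (|t₁ * t₂| * spin (b₁ == decide (0 < t₁)) * spin (b₂ == decide (0 < t₂))) := by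
    intro b₁ b₂ t₁ t₂ h₁ h₂
    have e₁ : spin (b₁ == decide (0 < t₁)) * |t₁| = spin b₁ * t₁ := by
      rw [← spin_mul_spin, mul_assoc, spin_sign_mul_abs h₁]
    have e₂ : spin (b₂ == decide (0 < t₂)) * |t₂| = spin b₂ * t₂ := by
      rw [← spin_mul_spin, mul_assoc, spin_sign_mul_abs h₂]
    have hprod : |t₁ * t₂| * spin (b₁ == decide (0 < t₁)) * spin (b₂ == decide (0 < t₂))
        = (spin b₁ * t₁) * (spin b₂ * t₂) := by
      rw [abs_mul, ← e₁, ← e₂]; ring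
    have hX : (spin b₁ * t₁) ^ 2 = t₁ ^ 2 := by rw [mul_pow, spin_sq, one_mul]
    have hY : (spin b₂ * t₂) ^ 2 = t₂ ^ 2 := by rw [mul_pow, spin_sq, one_mul]
    rw [sub_sq, hX, hY, hprod]; ring
  unfold dirichletForm dirichletFormA
  simp only
  have h1 : ∀ x : V, κ x * (spin (σ x) * Ψ x) ^ 2 = κ x * Ψ x ^ 2 := by
    intro x; rw [mul_pow, spin_sq, one_mul]
  have h2 : ∀ e : E, W e * (spin (σ (ends e).1) * Ψ (ends e).1
        - spin (σ (ends e).2) * Ψ (ends e).2) ^ 2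
      = W e * (Ψ (ends e).1 ^ 2 + Ψ (ends e).2 ^ 2)
        - 2 * (W e * |Ψ (ends e).1 * Ψ (ends e).2|
            * spin (σ (ends e).1 == decide (0 < Ψ (ends e).1))
            * spin (σ (ends e).2 == decide (0 < Ψ (ends e).2))) := by
    intro e
    rw [key _ _ _ _ (hΨ _) (hΨ _)]
    ring
  rw [Finset.sum_congr rfl (fun x _ => h1 x), Finset.sum_congr rfl (fun e _ => h2 e),
    Finset.sum_sub_distrib, Finset.mul_sum]
  ring

/-- The Ising weight appearing in the statement. -/
def isingWgt (ends : E → V × V) (W : E → ℝ) (Ψ : V → ℝ) (σ : V → Bool) : ℝ≥0∞ :=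
  ENNReal.ofReal (Real.exp (∑ e,
    W e * |Ψ (ends e).1 * Ψ (ends e).2| * spin (σ (ends e).1) * spin (σ (ends e).2)))

lemma isingWgt_ne_zero (ends : E → V × V) (W : E → ℝ) (Ψ : V → ℝ) (σ : V → Bool) :
    isingWgt ends W Ψ σ ≠ 0 := by
  simp [isingWgt, ENNReal.ofReal_eq_zero, (Real.exp_pos _).not_ge]

lemma isingWgt_ne_top (ends : E → V × V) (W : E → ℝ) (Ψ : V → ℝ) (σ : V → Bool) :
    isingWgt ends W Ψ σ ≠ ⊤ := ENNReal.ofReal_ne_top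

lemma gffDens_spin (ends : E → V × V) (W : E → ℝ) (κ : V → ℝ) (x₀ : V) (a : ℝ)
    (ha : a ≠ 0) (s : {x : V // x ≠ x₀} → Bool) (φ : {x : V // x ≠ x₀} → ℝ)
    (hφ : ∀ x, φ x ≠ 0) :
    gffDens ends W κ x₀ a (fun x => spin (s x) * φ x)
      = ENNReal.ofReal (Real.exp (-(1 / 2) * dirichletFormA ends W κ (extV x₀ a φ)))
        * isingWgt ends W (extV x₀ a φ)
            (fun x => extB x₀ s x == decide (0 < extV x₀ a φ x)) := by
  have hΨ : ∀ x, extV x₀ a φ x ≠ 0 := by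
    intro x
    by_cases h : x = x₀ <;> simp [extV, h, ha, hφ]
  unfold gffDens
  rw [extV_spin, dirichlet_spin ends W κ (extB x₀ s) (extV x₀ a φ) hΨ]
  have hsplit : ∀ A S : ℝ, -(1 / 2 : ℝ) * (A - 2 * S) = -(1 / 2) * A + S := by
    intro A S; ring
  rw [hsplit, Real.exp_add, ENNReal.ofReal_mul (Real.exp_nonneg _)]
  rfl

lemma sum_extB {M : Type*} [AddCommMonoid M] (x₀ : V) (d : V → Bool) (hd : d x₀ = true)
    (f : (V → Bool) → M) :
    ∑ s : {x : V // x ≠ x₀} → Bool, f (fun x => extB x₀ s x == d x)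
      = ∑ σ ∈ Finset.univ.filter (fun σ : V → Bool => σ x₀ = true), f σ := by
  have beqbeq : ∀ (u v : Bool), ((u == v) == v) = u := by decide
  refine Finset.sum_nbij' (i := fun s => fun x => extB x₀ s x == d x)
    (j := fun σ => fun x : {x : V // x ≠ x₀} => σ x.1 == d x.1) ?_ ?_ ?_ ?_ ?_
  · intro s _
    simp only [Finset.mem_filter, Finset.mem_univ, true_and]
    simp [extB, hd]
  · intro σ _; exact Finset.mem_univ _
  · intro s _
    funext x
    simp [extB, x.2, beqbeq]
  · intro σ hσ
    simp only [Finset.mem_filter, Finset.mem_univ, true_and] at hσ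
    funext x
    by_cases h : x = x₀
    · subst h; simp [extB, hd, hσ]
    · simp [extB, h, beqbeq]
  · intro s _; rfl

lemma flip_measurePreserving (x₀ : V) (s : {x : V // x ≠ x₀} → Bool) :
    MeasurePreserving (fun φ : {x : V // x ≠ x₀} → ℝ => fun x => spin (s x) * φ x)
      volume volume := by
  have h : ∀ b : Bool, MeasurePreserving (fun r : ℝ => spin b * r) volume volume := by
    intro b
    cases b
    · have : (fun r : ℝ => spin false * r) = Neg.neg := by
        funext r; simp [spin]
      rw [this]
      exact Measure.measurePreserving_neg _
    · have : (fun r : ℝ => spin true * r) = id := by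
        funext r; simp [spin]
      rw [this]
      exact MeasurePreserving.id _
  exact volume_preserving_pi (fun x => h (s x))

set_option maxHeartbeats 2000000 in
/-- under the pinned GFF, conditionally on `|φ|`, the signs of `φ`
follow the Ising distribution with interactions `J_e(|φ|) = W_e |φ_{e₊} φ_{e₋}|`
conditioned on `σ_{x₀} = +1`. -/
theorem stmt7 [Nonempty V] (ends : E → V × V)
    (hloop : ∀ e, (ends e).1 ≠ (ends e).2)
    (hconn : (og ends (fun _ => True)).Connected)
    (W : E → ℝ) (hW : ∀ e, 0 < W e) (κ : V → ℝ) (hκ : ∀ x, 0 ≤ κ x)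
    (x₀ : V) (a : ℝ) (ha : 0 < a)
    (F : (V → ℝ) → ℝ≥0∞) (hF : Measurable F)
    (g : (V → Bool) → ℝ≥0∞) :
    ∫⁻ φ, F (fun x => |extV x₀ a φ x|) *
        g (fun x => decide (0 < extV x₀ a φ x))
      ∂(gffMeasure ends W κ x₀ a)
    =
    ∫⁻ φ, F (fun x => |extV x₀ a φ x|) *
        ((∑ σ ∈ Finset.univ.filter (fun σ : V → Bool => σ x₀ = true),
            g σ * ENNReal.ofReal (Real.exp (∑ e,
              W e * |extV x₀ a φ (ends e).1 * extV x₀ a φ (ends e).2| *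
                spin (σ (ends e).1) * spin (σ (ends e).2)))) /
         (∑ σ ∈ Finset.univ.filter (fun σ : V → Bool => σ x₀ = true),
            ENNReal.ofReal (Real.exp (∑ e,
              W e * |extV x₀ a φ (ends e).1 * extV x₀ a φ (ends e).2| *
                spin (σ (ends e).1) * spin (σ (ends e).2)))))
      ∂(gffMeasure ends W κ x₀ a) := by
  set ι := {x : V // x ≠ x₀} with hι
  -- basic measurability of the coordinates of the extension
  have hext : ∀ x : V, Measurable (fun φ : ι → ℝ => extV x₀ a φ x) := by
    intro x
    unfold extV
    by_cases h : x = x₀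
    · simp only [dif_pos h]; exact measurable_const
    · simp only [dif_neg h]; exact measurable_pi_apply _
  have hdm : Measurable (fun φ : ι → ℝ => dirichletForm ends W κ (extV x₀ a φ)) := by
    unfold dirichletForm
    apply Measurable.add
    · exact Finset.measurable_sum _ fun x _ =>
        measurable_const.mul ((hext x).pow measurable_const)
    · exact Finset.measurable_sum _ fun e _ =>
        measurable_const.mul (((hext _).sub (hext _)).pow measurable_const)
  have hD : Measurable (gffDens ends W κ x₀ a) := by
    unfold gffDens
    exact ENNReal.measurable_ofReal.comp (Real.measurable_exp.comp (measurable_const.mul hdm))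
  -- the integrands
  set Lf : (ι → ℝ) → ℝ≥0∞ := fun φ =>
    F (fun x => |extV x₀ a φ x|) * g (fun x => decide (0 < extV x₀ a φ x)) with hLf
  set Rf : (ι → ℝ) → ℝ≥0∞ := fun φ =>
    F (fun x => |extV x₀ a φ x|) *
      ((∑ σ ∈ Finset.univ.filter (fun σ : V → Bool => σ x₀ = true),
          g σ * ENNReal.ofReal (Real.exp (∑ e,
            W e * |extV x₀ a φ (ends e).1 * extV x₀ a φ (ends e).2| *
              spin (σ (ends e).1) * spin (σ (ends e).2)))) /
       (∑ σ ∈ Finset.univ.filter (fun σ : V → Bool => σ x₀ = true),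
          ENNReal.ofReal (Real.exp (∑ e,
            W e * |extV x₀ a φ (ends e).1 * extV x₀ a φ (ends e).2| *
              spin (σ (ends e).1) * spin (σ (ends e).2))))) with hRf
  have hFabs : Measurable (fun φ : ι → ℝ => F (fun x => |extV x₀ a φ x|)) :=
    hF.comp (measurable_pi_lambda _ fun x => (hext x).abs)
  have hsgn : Measurable (fun φ : ι → ℝ => (fun x => decide (0 < extV x₀ a φ x))) := by
    apply measurable_pi_lambda
    intro x
    have : (fun φ : ι → ℝ => decide (0 < extV x₀ a φ x))
        = fun φ => if 0 < extV x₀ a φ x then true else false := by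
      funext φ; by_cases h : 0 < extV x₀ a φ x <;> simp [h]
    rw [this]
    exact Measurable.ite (measurableSet_lt measurable_const (hext x))
      measurable_const measurable_const
  have hLm : Measurable Lf :=
    hFabs.mul ((measurable_of_countable g).comp hsgn)
  have hwgt : ∀ σ : V → Bool, Measurable (fun φ : ι → ℝ =>
      ENNReal.ofReal (Real.exp (∑ e,
        W e * |extV x₀ a φ (ends e).1 * extV x₀ a φ (ends e).2| *
          spin (σ (ends e).1) * spin (σ (ends e).2)))) := by
    intro σ
    apply ENNReal.measurable_ofReal.comp
    apply Real.measurable_exp.comp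
    apply Finset.measurable_sum
    intro e _
    exact (((measurable_const.mul ((hext _).mul (hext _)).abs).mul
      measurable_const).mul measurable_const)
  have hRm : Measurable Rf := by
    apply hFabs.mul
    apply Measurable.div
    · exact Finset.measurable_sum _ fun σ _ => measurable_const.mul (hwgt σ)
    · exact Finset.measurable_sum _ fun σ _ => hwgt σ
  -- reduce to integrals against Lebesgue measure with the density
  rw [gffMeasure, lintegral_smul_measure, lintegral_smul_measure]
  congr 1
  rw [lintegral_withDensity_eq_lintegral_mul_non_measurable _ hD
      (Filter.Eventually.of_forall fun φ => ENNReal.ofReal_lt_top),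
    lintegral_withDensity_eq_lintegral_mul_non_measurable _ hD
      (Filter.Eventually.of_forall fun φ => ENNReal.ofReal_lt_top)]
  -- the sign-flip trick
  have hcard : (Finset.univ : Finset (ι → Bool)).card • (1 : ℝ≥0∞) ≠ 0 ∧
      (Finset.univ : Finset (ι → Bool)).card • (1 : ℝ≥0∞) ≠ ⊤ := by
    constructor
    · simp [Finset.card_univ, Fintype.card_ne_zero]
    · simp
  have key : ∀ h : (ι → ℝ) → ℝ≥0∞, Measurable h →
      ((Finset.univ : Finset (ι → Bool)).card : ℝ≥0∞) * ∫⁻ φ, h φ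
        = ∫⁻ φ : ι → ℝ, ∑ s : ι → Bool, h (fun x => spin (s x) * φ x) := by
    intro h hm
    rw [lintegral_finset_sum (f := fun (s : ι → Bool) (φ : ι → ℝ) =>
        h (fun x => spin (s x) * φ x)) Finset.univ
      (fun s _ => hm.comp (flip_measurePreserving x₀ s).measurable)]
    have heach : ∀ s : ι → Bool,
        (∫⁻ φ : ι → ℝ, h (fun x => spin (s x) * φ x)) = ∫⁻ φ, h φ := fun s =>
      (flip_measurePreserving x₀ s).lintegral_comp hm
    rw [Finset.sum_congr rfl (fun s _ => heach s), Finset.sum_const, nsmul_eq_mul]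
  -- almost-everywhere, coordinates are nonzero
  have hae : ∀ᵐ φ : ι → ℝ, ∀ x : ι, φ x ≠ 0 := by
    rw [ae_all_iff]
    intro x
    exact Measure.ae_eval_ne _ x 0
  -- pointwise identity of the two flipped sums
  have hpt : ∀ φ : ι → ℝ, (∀ x : ι, φ x ≠ 0) →
      (∑ s : ι → Bool, gffDens ends W κ x₀ a (fun x => spin (s x) * φ x) * Lf (fun x => spin (s x) * φ x))
        = ∑ s : ι → Bool, gffDens ends W κ x₀ a (fun x => spin (s x) * φ x) * Rf (fun x => spin (s x) * φ x) := by
    intro φ hφ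
    set Ψ := extV x₀ a φ with hΨdef
    have hΨ : ∀ x, Ψ x ≠ 0 := by
      intro x
      by_cases h : x = x₀ <;> simp [hΨdef, extV, h, ha.ne', hφ]
    set d : V → Bool := fun x => decide (0 < Ψ x) with hd
    have hdx₀ : d x₀ = true := by simp [hd, hΨdef, extV, ha]
    set Dabs : ℝ≥0∞ :=
      ENNReal.ofReal (Real.exp (-(1 / 2) * dirichletFormA ends W κ Ψ)) with hDabs
    -- how the pieces transform under a sign flip
    have habs : ∀ s : ι → Bool,
        (fun x => |extV x₀ a (fun y => spin (s y) * φ y) x|) = fun x => |Ψ x| := by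
      intro s
      funext x
      rw [extV_spin]
      simp only []
      rw [abs_mul, abs_spin, one_mul]
    have hsgn' : ∀ s : ι → Bool,
        (fun x => decide (0 < extV x₀ a (fun y => spin (s y) * φ y) x))
          = fun x => (extB x₀ s x == d x) := by
      intro s
      funext x
      rw [extV_spin]
      simp only []
      rw [decide_pos_spin_mul _ (hΨ x)]
    have hdens : ∀ s : ι → Bool,
        gffDens ends W κ x₀ a (fun y => spin (s y) * φ y)
          = Dabs * isingWgt ends W Ψ (fun x => extB x₀ s x == d x) :=
      fun s => gffDens_spin ends W κ x₀ a ha.ne' s φ hφ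
    have hprodabs : ∀ (s : ι → Bool) (e : E),
        |extV x₀ a (fun y => spin (s y) * φ y) (ends e).1 *
          extV x₀ a (fun y => spin (s y) * φ y) (ends e).2|
          = |Ψ (ends e).1 * Ψ (ends e).2| := by
      intro s e
      rw [extV_spin]
      simp only []
      rw [abs_mul, abs_mul (Ψ (ends e).1), abs_mul, abs_mul, abs_spin, abs_spin,
        one_mul, one_mul]
    -- numerator and denominator (as functions of the modulus only)
    set num : ℝ≥0∞ := ∑ σ ∈ Finset.univ.filter (fun σ : V → Bool => σ x₀ = true),
        g σ * isingWgt ends W Ψ σ with hnum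
    set den : ℝ≥0∞ := ∑ σ ∈ Finset.univ.filter (fun σ : V → Bool => σ x₀ = true),
        isingWgt ends W Ψ σ with hden
    have hden0 : den ≠ 0 := by
      intro h0
      rw [hden, Finset.sum_eq_zero_iff] at h0
      exact isingWgt_ne_zero ends W Ψ (fun _ => true)
        (h0 (fun _ => true) (by simp))
    have hdentop : den ≠ ⊤ := by
      rw [hden]
      exact (ENNReal.sum_lt_top.mpr fun σ _ => (isingWgt_ne_top ends W Ψ σ).lt_top).ne
    -- compute the left sum
    have hL : (∑ s : ι → Bool, gffDens ends W κ x₀ a (fun x => spin (s x) * φ x) * Lf (fun x => spin (s x) * φ x))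
        = Dabs * (F (fun x => |Ψ x|) * num) := by
      have : ∀ s : ι → Bool,
          gffDens ends W κ x₀ a (fun x => spin (s x) * φ x) * Lf (fun x => spin (s x) * φ x)
            = Dabs * (F (fun x => |Ψ x|) *
                (g (fun x => extB x₀ s x == d x) *
                  isingWgt ends W Ψ (fun x => extB x₀ s x == d x))) := by
        intro s
        simp only [hLf]
        rw [hdens s, habs s, hsgn' s]
        ring
      rw [Finset.sum_congr rfl (fun s _ => this s), ← Finset.mul_sum, ← Finset.mul_sum]
      congr 1
      congr 1
      rw [sum_extB x₀ d hdx₀ (fun σ => g σ * isingWgt ends W Ψ σ), hnum]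
    -- compute the right sum
    have hR : (∑ s : ι → Bool, gffDens ends W κ x₀ a (fun x => spin (s x) * φ x) * Rf (fun x => spin (s x) * φ x))
        = Dabs * (F (fun x => |Ψ x|) * num) := by
      have hratio : ∀ s : ι → Bool,
          gffDens ends W κ x₀ a (fun x => spin (s x) * φ x) * Rf (fun x => spin (s x) * φ x)
            = Dabs * (F (fun x => |Ψ x|) * ((num / den) *
                isingWgt ends W Ψ (fun x => extB x₀ s x == d x))) := by
        intro s
        simp only [hRf]
        rw [hdens s, habs s]
        have hnum' : (∑ σ ∈ Finset.univ.filter (fun σ : V → Bool => σ x₀ = true),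
            g σ * ENNReal.ofReal (Real.exp (∑ e,
              W e * |extV x₀ a (fun y => spin (s y) * φ y) (ends e).1 *
                  extV x₀ a (fun y => spin (s y) * φ y) (ends e).2| *
                spin (σ (ends e).1) * spin (σ (ends e).2)))) = num := by
          rw [hnum]
          apply Finset.sum_congr rfl
          intro σ _
          congr 1
          unfold isingWgt
          congr 2
          apply Finset.sum_congr rfl
          intro e _
          rw [hprodabs s e]
        have hden' : (∑ σ ∈ Finset.univ.filter (fun σ : V → Bool => σ x₀ = true),
            ENNReal.ofReal (Real.exp (∑ e,
              W e * |extV x₀ a (fun y => spin (s y) * φ y) (ends e).1 *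
                  extV x₀ a (fun y => spin (s y) * φ y) (ends e).2| *
                spin (σ (ends e).1) * spin (σ (ends e).2)))) = den := by
          rw [hden]
          apply Finset.sum_congr rfl
          intro σ _
          unfold isingWgt
          congr 2
          apply Finset.sum_congr rfl
          intro e _
          rw [hprodabs s e]
        rw [hnum', hden']
        ring
      rw [Finset.sum_congr rfl (fun s _ => hratio s), ← Finset.mul_sum, ← Finset.mul_sum]
      congr 1
      congr 1
      rw [← Finset.mul_sum,
        sum_extB x₀ d hdx₀ (fun σ => isingWgt ends W Ψ σ), ← hden,
        ENNReal.div_mul_cancel hden0 hdentop]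
    rw [hL, hR]
  -- put everything together
  have hsum_eq : (∫⁻ φ : ι → ℝ, ∑ s : ι → Bool,
        gffDens ends W κ x₀ a (fun x => spin (s x) * φ x) * Lf (fun x => spin (s x) * φ x))
      = ∫⁻ φ : ι → ℝ, ∑ s : ι → Bool,
        gffDens ends W κ x₀ a (fun x => spin (s x) * φ x) * Rf (fun x => spin (s x) * φ x) :=
    lintegral_congr_ae (hae.mono fun φ hφ => hpt φ hφ)
  have hLkey := key (fun φ => gffDens ends W κ x₀ a φ * Lf φ) (hD.mul hLm)
  have hRkey := key (fun φ => gffDens ends W κ x₀ a φ * Rf φ) (hD.mul hRm)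
  have : ((Finset.univ : Finset (ι → Bool)).card : ℝ≥0∞) *
        (∫⁻ φ, gffDens ends W κ x₀ a φ * Lf φ)
      = ((Finset.univ : Finset (ι → Bool)).card : ℝ≥0∞) *
        (∫⁻ φ, gffDens ends W κ x₀ a φ * Rf φ) := by
    rw [hLkey, hRkey, hsum_eq]
  have hcard0 : ((Finset.univ : Finset (ι → Bool)).card : ℝ≥0∞) ≠ 0 := by
    simp [Finset.card_univ, Fintype.card_ne_zero]
  have hcardtop : ((Finset.univ : Finset (ι → Bool)).card : ℝ≥0∞) ≠ ⊤ :=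
    ENNReal.natCast_ne_top _
  exact (ENNReal.mul_right_inj hcard0 hcardtop).mp this
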